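/- For any monoid M and any M-pigmented word p, one has p ∼ first_1(p) · first_1^R(p), where · denotes concatenation. -/

import Mathlib

/-- An `M`-pigmented word of arity `n`: a list of letters `(i, α)` whose value is
`i ∈ Fin n` (representing the value `i + 1 ∈ {1, …, n}`) and whose pigment is `α ∈ M`. -/
abbrev PW (M : Type*) (n : ℕ) : Type _ := List (Fin n × M)

/-- The value `i` occurs in the word `p`. -/
def hasVal {M : Type*} {n : ℕ} (p : PW M n) (i : Fin n) : Prop := ∃ l ∈ p, l.1 = i

/-- `⤳₁`: delete a letter whose value occurs both before and after it
(a position which is neither a left `1`-witness nor a right `1`-witness). -/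
def Step1 {M : Type*} {n : ℕ} (u v : PW M n) : Prop :=
  ∃ (p p' : PW M n) (i : Fin n) (α : M),
    u = p ++ (i, α) :: p' ∧ v = p ++ p' ∧ hasVal p i ∧ hasVal p' i

/-- `⤳₂`: swap two adjacent letters `i₁^{α₁} i₂^{α₂}` with distinct values, where
`i₁` occurs after, `i₂` occurs before, and `i₂` does not occur after. -/
def Step2 {M : Type*} {n : ℕ} (u v : PW M n) : Prop :=
  ∃ (p p' : PW M n) (i₁ i₂ : Fin n) (α₁ α₂ : M),
    u = p ++ (i₁, α₁) :: (i₂, α₂) :: p' ∧ v = p ++ (i₂, α₂) :: (i₁, α₁) :: p' ∧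
    i₁ ≠ i₂ ∧ hasVal p' i₁ ∧ hasVal p i₂ ∧ ¬ hasVal p' i₂

/-- `⤳₃`: contract two equal adjacent letters to one. -/
def Step3 {M : Type*} {n : ℕ} (u v : PW M n) : Prop :=
  ∃ (p p' : PW M n) (i : Fin n) (α : M),
    u = p ++ (i, α) :: (i, α) :: p' ∧ v = p ++ (i, α) :: p'

/-- The union `⤳₁ ∪ ⤳₂ ∪ ⤳₃`; the relation `∼` is its reflexive, symmetric and
transitive closure `Relation.EqvGen MagnStep`. -/
def MagnStep {M : Type*} {n : ℕ} (u v : PW M n) : Prop := Step1 u v ∨ Step2 u v ∨ Step3 u v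

/-- `firstKAux k pre p` keeps those letters of `p` whose position is a left
`k`-witness, given that the prefix `pre` has already been read. -/
def firstKAux {M : Type*} {n : ℕ} (k : ℕ) : PW M n → PW M n → PW M n
  | _, [] => []
  | pre, l :: t =>
    if pre.countP (fun x => decide (x.1 = l.1)) < k
    then l :: firstKAux k (pre ++ [l]) t
    else firstKAux k (pre ++ [l]) t

/-- `firstK k p` keeps, for each value, the first `k` occurrences of that value in `p`
(the letters at left `k`-witness positions). -/
def firstK {M : Type*} {n : ℕ} (k : ℕ) (p : PW M n) : PW M n := firstKAux k [] p

/-- `firstKR k p` keeps, for each value, the last `k` occurrences of that value in `p`: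
it is the reverse of `firstK k` applied to the reverse of `p`. -/
def firstKR {M : Type*} {n : ℕ} (k : ℕ) (p : PW M n) : PW M n := (firstK k p.reverse).reverse

/-
Induct on the word. Prepending a letter `l = i^α` to `t ∼ first₁(t)·first₁ᴿ(t)`: if `i` occurs
in `t`, the first `i`-letter of `first₁(t)` now has `i` on both sides and is deleted by `⤳₁`,
leaving `first₁(l t)·first₁ᴿ(l t)`. Otherwise `l` is doubled by `⤳₃` and the second copy is
carried rightwards across `first₁(t)` by `⤳₂` swaps, which are legal because every value of
`first₁(t)` recurs in `first₁ᴿ(t)` while `i` does not.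
-/

section Words
variable {M : Type*} {n : ℕ}

@[simp]
lemma hasVal_nil {i : Fin n} : ¬ hasVal ([] : PW M n) i := by simp [hasVal]

@[simp]
lemma hasVal_cons {l : Fin n × M} {t : PW M n} {i : Fin n} :
    hasVal (l :: t) i ↔ l.1 = i ∨ hasVal t i := by
  simp [hasVal]

@[simp]
lemma hasVal_append {a b : PW M n} {i : Fin n} :
    hasVal (a ++ b) i ↔ hasVal a i ∨ hasVal b i := by
  simp [hasVal, or_and_right, exists_or]

@[simp]
lemma hasVal_reverse {q : PW M n} {i : Fin n} : hasVal q.reverse i ↔ hasVal q i := by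
  simp [hasVal]

lemma hasVal_of_sublist {q r : PW M n} (h : q.Sublist r) {i : Fin n} (hq : hasVal q i) :
    hasVal r i :=
  let ⟨l, hl, hli⟩ := hq
  ⟨l, h.subset hl, hli⟩

lemma firstKAux_append (k : ℕ) (c a b : PW M n) :
    firstKAux k c (a ++ b) = firstKAux k c a ++ firstKAux k (c ++ a) b := by
  induction a generalizing c with
  | nil => simp [firstKAux]
  | cons l t ih =>
    by_cases h : c.countP (fun x => decide (x.1 = l.1)) < k <;> simp [firstKAux, h, ih]

lemma firstKAux_sublist (k : ℕ) (c q : PW M n) : (firstKAux k c q).Sublist q := by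
  induction q generalizing c with
  | nil => exact .slnil
  | cons l t ih =>
    unfold firstKAux
    split
    · exact (ih _).cons_cons l
    · exact (ih _).cons l

lemma countP_fst_eq_lt_one {c : PW M n} {i : Fin n} :
    c.countP (fun x => decide (x.1 = i)) < 1 ↔ ¬ hasVal c i := by
  simp only [Nat.lt_one_iff, List.countP_eq_zero, decide_eq_true_eq, hasVal, not_exists,
    not_and]

lemma firstKAux_one_cons_of_hasVal {c t : PW M n} {l : Fin n × M} (h : hasVal c l.1) :
    firstKAux 1 c (l :: t) = firstKAux 1 (c ++ [l]) t := by
  rw [firstKAux, if_neg fun hc => countP_fst_eq_lt_one.mp hc h]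

lemma firstKAux_one_cons_of_not_hasVal {c t : PW M n} {l : Fin n × M} (h : ¬ hasVal c l.1) :
    firstKAux 1 c (l :: t) = l :: firstKAux 1 (c ++ [l]) t := by
  rw [firstKAux, if_pos (countP_fst_eq_lt_one.mpr h)]

lemma firstKAux_one_cons_left (l : Fin n × M) (d t : PW M n) :
    firstKAux 1 (l :: d) t = (firstKAux 1 d t).filter (fun x => x.1 ≠ l.1) := by
  induction t generalizing d with
  | nil => rfl
  | cons m t ih =>
    by_cases hdm : hasVal d m.1
    · rw [firstKAux_one_cons_of_hasVal (hasVal_cons.mpr (.inr hdm)),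
        firstKAux_one_cons_of_hasVal hdm, List.cons_append, ih]
    by_cases hlm : l.1 = m.1
    · rw [firstKAux_one_cons_of_hasVal (hasVal_cons.mpr (.inl hlm)),
        firstKAux_one_cons_of_not_hasVal hdm, List.cons_append, ih,
        List.filter_cons_of_neg (by simp [hlm])]
    · rw [firstKAux_one_cons_of_not_hasVal (by simp [hlm, hdm]),
        firstKAux_one_cons_of_not_hasVal hdm, List.cons_append, ih]
      exact (List.filter_cons_of_pos (p := fun x : Fin n × M => x.1 ≠ l.1)
        (decide_eq_true (Ne.symm hlm))).symm

lemma firstK_one_cons (l : Fin n × M) (t : PW M n) :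
    firstK 1 (l :: t) = l :: (firstK 1 t).filter (fun x => x.1 ≠ l.1) := by
  rw [firstK, firstKAux_one_cons_of_not_hasVal hasVal_nil, List.nil_append,
    firstKAux_one_cons_left, firstK]

lemma firstKR_one_cons_of_hasVal {l : Fin n × M} {t : PW M n} (h : hasVal t l.1) :
    firstKR 1 (l :: t) = firstKR 1 t := by
  rw [firstKR, List.reverse_cons, firstK, firstKAux_append,
    firstKAux_one_cons_of_hasVal (by simpa using h), firstKAux, List.append_nil, firstKR, firstK]

lemma firstKR_one_cons_of_not_hasVal {l : Fin n × M} {t : PW M n} (h : ¬ hasVal t l.1) :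
    firstKR 1 (l :: t) = l :: firstKR 1 t := by
  rw [firstKR, List.reverse_cons, firstK, firstKAux_append,
    firstKAux_one_cons_of_not_hasVal (by simpa using h), firstKAux, List.reverse_append,
    firstKR, firstK, List.reverse_singleton, List.singleton_append]

@[simp]
lemma hasVal_firstK_one {q : PW M n} {i : Fin n} : hasVal (firstK 1 q) i ↔ hasVal q i := by
  refine ⟨hasVal_of_sublist (firstKAux_sublist 1 [] q), fun h => ?_⟩
  induction q with
  | nil => exact absurd h hasVal_nil
  | cons l t ih =>
    rw [firstK_one_cons, hasVal_cons]
    by_cases hli : l.1 = i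
    · exact .inl hli
    · obtain ⟨x, hx, rfl⟩ := ih ((hasVal_cons.mp h).resolve_left hli)
      exact .inr ⟨x, List.mem_filter.mpr ⟨hx, decide_eq_true (Ne.symm hli)⟩, rfl⟩

@[simp]
lemma hasVal_firstKR_one {q : PW M n} {i : Fin n} : hasVal (firstKR 1 q) i ↔ hasVal q i := by
  rw [firstKR, hasVal_reverse, hasVal_firstK_one, hasVal_reverse]

end Words

section Equivalence
variable {M : Type*} {n : ℕ}

open Relation

lemma MagnStep.append_left (c : PW M n) {u v : PW M n} (h : MagnStep u v) :
    MagnStep (c ++ u) (c ++ v) := by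
  rcases h with ⟨p, p', i, α, rfl, rfl, hp, hp'⟩ |
    ⟨p, p', i₁, i₂, α₁, α₂, rfl, rfl, hne, h₁, h₂, h₂'⟩ | ⟨p, p', i, α, rfl, rfl⟩
  · exact .inl ⟨c ++ p, p', i, α, by simp, by simp, by simp [hp], hp'⟩
  · exact .inr <| .inl
      ⟨c ++ p, p', i₁, i₂, α₁, α₂, by simp, by simp, hne, h₁, by simp [h₂], h₂'⟩
  · exact .inr <| .inr ⟨c ++ p, p', i, α, by simp, by simp⟩

lemma eqvGen_magnStep_append_left (c : PW M n) {u v : PW M n} (h : EqvGen MagnStep u v) :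
    EqvGen MagnStep (c ++ u) (c ++ v) := by
  induction h with
  | rel x y hxy => exact .rel _ _ (hxy.append_left c)
  | refl x => exact .refl _
  | symm x y _ ih => exact .symm _ _ ih
  | trans x y z _ _ ih₁ ih₂ => exact .trans _ _ _ ih₁ ih₂

lemma eqvGen_magnStep_double (l : Fin n × M) (t : PW M n) :
    EqvGen MagnStep (l :: t) (l :: l :: t) :=
  .symm _ _ <| .rel _ _ <| .inr <| .inr ⟨[], t, l.1, l.2, rfl, rfl⟩

lemma eqvGen_magnStep_filter (Q : Fin n × M → Bool) (p w s : PW M n)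
    (h : ∀ x ∈ w, Q x = false → hasVal p x.1 ∧ hasVal s x.1) :
    EqvGen MagnStep (p ++ (w ++ s)) (p ++ (w.filter Q ++ s)) := by
  induction w generalizing p with
  | nil => exact .refl _
  | cons x w ih =>
    have hw (p' : PW M n) (hpp' : p.Sublist p') :
        ∀ y ∈ w, Q y = false → hasVal p' y.1 ∧ hasVal s y.1 := fun y hy hQ =>
      (h y (List.mem_cons_of_mem x hy) hQ).imp_left (hasVal_of_sublist hpp')
    cases hQ : Q x
    · obtain ⟨hp, hs⟩ := h x List.mem_cons_self hQ
      have hdel : MagnStep (p ++ x :: (w ++ s)) (p ++ (w ++ s)) :=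
        .inl ⟨p, w ++ s, x.1, x.2, rfl, rfl, hp, by simp [hs]⟩
      simpa [hQ] using EqvGen.trans _ _ _ (.rel _ _ hdel) (ih p (hw p (.refl p)))
    · simpa [hQ] using ih (p ++ [x]) (hw _ (List.sublist_append_left p [x]))

lemma eqvGen_magnStep_move_right (l : Fin n × M) (p w s : PW M n) (hp : hasVal p l.1)
    (hws : ¬ hasVal (w ++ s) l.1) (hw : ∀ x ∈ w, hasVal s x.1) :
    EqvGen MagnStep (p ++ l :: (w ++ s)) (p ++ w ++ l :: s) := by
  induction w generalizing p with
  | nil => simpa using EqvGen.refl _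
  | cons x w ih =>
    have hxs : hasVal s x.1 := hw x List.mem_cons_self
    have hws' : ¬ hasVal (w ++ s) l.1 := by simp_all
    have hswap : MagnStep (p ++ x :: l :: (w ++ s)) (p ++ l :: x :: (w ++ s)) :=
      .inr <| .inl ⟨p, w ++ s, x.1, l.1, x.2, l.2, rfl, rfl,
        fun hxl => hws (by simp [← hxl, hxs]), by simp [hxs], hp, hws'⟩
    have hrest := ih (p ++ [x]) (by simp [hp]) hws' (fun y hy => hw y (List.mem_cons_of_mem x hy))
    simp only [List.append_assoc, List.cons_append] at hrest ⊢
    exact .trans _ _ _ (.symm _ _ (.rel _ _ hswap)) hrest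

end Equivalence

theorem eqvGen_first_one_concat_general (M : Type*) (n : ℕ) (p : PW M n) :
    Relation.EqvGen MagnStep p (firstK 1 p ++ firstKR 1 p) := by
  induction p with
  | nil => exact .refl _
  | cons l t ih =>
    have hprefix := eqvGen_magnStep_append_left [l] ih
    have hmem_firstK {x} (hx : x ∈ firstK 1 t) : hasVal t x.1 :=
      hasVal_firstK_one.mp ⟨x, hx, rfl⟩
    rw [firstK_one_cons]
    by_cases hlt : hasVal t l.1
    · have hdel := eqvGen_magnStep_filter (fun x => x.1 ≠ l.1) [l] (firstK 1 t) (firstKR 1 t)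
        (fun x _ hx => by simp_all)
      rw [firstKR_one_cons_of_hasVal hlt]
      simpa using hprefix.trans _ _ _ hdel
    · have hfilter : (firstK 1 t).filter (fun x => x.1 ≠ l.1) = firstK 1 t :=
        List.filter_eq_self.mpr fun x hx => by
          simpa using fun hxl : x.1 = l.1 => hlt (hxl ▸ hmem_firstK hx)
      have hmove := eqvGen_magnStep_move_right l [l] (firstK 1 t) (firstKR 1 t) (by simp)
        (by simpa using hlt) (fun x hx => hasVal_firstKR_one.mpr (hmem_firstK hx))
      rw [firstKR_one_cons_of_not_hasVal hlt, hfilter]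
      exact (eqvGen_magnStep_double l t).trans _ _ _ <|
        (eqvGen_magnStep_append_left [l] hprefix).trans _ _ _ (by simpa using hmove)

/-- Every `M`-pigmented word is `∼`-equivalent to the concatenation of its
`first₁` part and its `first₁^R` part. -/
theorem eqvGen_first_one_concat (M : Type*) [Monoid M] (n : ℕ) (p : PW M n) :
    Relation.EqvGen MagnStep p (firstK 1 p ++ firstKR 1 p) :=
  eqvGen_first_one_concat_general M n p
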